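/- arXiv:1103.0218 — 4 statements merged into one kernel-verified Lean document; each statement's English description precedes it below -/
import Mathlib

section
/- For each integer n ≥ 1 there exists a polynomial f_n in ℤ[x_1, …, x_n] which is homogeneous of degree n with respect to the grading in which x_i has degree i, and which satisfies the identity f_n(1 + x_1, x_1 + x_2, …, x_{n-1} + x_n) = 1 + f_n(x_1, …, x_n) in ℤ[x_1, …, x_n]. -/
open MvPolynomial

/-- The shift substitution on `ℤ[x_1, …, x_n]` (variable `i : Fin n` represents `x_{i+1}`),
sending `x_i ↦ x_{i-1} + x_i` with the convention `x_0 = 1`. -/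
noncomputable def shiftSub (n : ℕ) :
    MvPolynomial (Fin n) ℤ →ₐ[ℤ] MvPolynomial (Fin n) ℤ :=
  aeval (fun i : Fin n =>
    (if (i : ℕ) = 0 then 1
     else X (⟨(i : ℕ) - 1, Nat.lt_of_le_of_lt (Nat.sub_le _ _) i.2⟩ : Fin n)) + X i)

open Finset in
noncomputable def Yv (n j : ℕ) : MvPolynomial (Fin n) ℤ :=
  if h : j < n then X ⟨j, h⟩ else 0

/-- Newton polynomials: `F n k` expresses the `k`-th power sum in the
elementary symmetric polynomials `x_1, …`. -/
noncomputable def Fp (n : ℕ) : ℕ → MvPolynomial (Fin n) ℤ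
  | 0 => 0
  | (k+1) =>
      ∑ i ∈ (Finset.range k).attach,
        C ((-1 : ℤ)^(i : ℕ)) * (Yv n i * Fp n (k - (i : ℕ)))
      + C ((-1 : ℤ)^k * (k+1)) * Yv n k
  termination_by k => k
  decreasing_by exact Nat.lt_succ_of_le (Nat.sub_le _ _)

lemma Fp_succ (n k : ℕ) :
    Fp n (k+1) =
      ∑ i ∈ Finset.range k, C ((-1 : ℤ)^i) * (Yv n i * Fp n (k - i))
      + C ((-1 : ℤ)^k * (k+1)) * Yv n k := by
  rw [Fp]
  exact congrArg (· + _) (Finset.sum_attach _ fun i => C ((-1 : ℤ)^i) * (Yv n i * Fp n (k - i)))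

lemma Yv_hom (n j : ℕ) :
    (Yv n j).IsWeightedHomogeneous (fun i : Fin n => (i : ℕ) + 1) (j+1) := by
  unfold Yv
  split
  · exact isWeightedHomogeneous_X (R := ℤ) (fun i : Fin n => (i : ℕ) + 1) _
  · exact isWeightedHomogeneous_zero (R := ℤ) (fun i : Fin n => (i : ℕ) + 1) (j+1)

lemma Fp_hom (n : ℕ) : ∀ k, (Fp n k).IsWeightedHomogeneous (fun i : Fin n => (i : ℕ) + 1) k := by
  intro k
  induction k using Nat.strong_induction_on with
  | _ k ih =>
    match k with
    | 0 =>
      rw [show Fp n 0 = 0 from by rw [Fp]]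
      exact isWeightedHomogeneous_zero (R := ℤ) (fun i : Fin n => (i : ℕ) + 1) 0
    | (k+1) =>
      rw [Fp_succ]
      apply IsWeightedHomogeneous.add
      · apply IsWeightedHomogeneous.sum
        intro i hi
        simp only [Finset.mem_range] at hi
        have h1 := (isWeightedHomogeneous_C (fun i : Fin n => (i : ℕ) + 1)
            ((-1 : ℤ)^i)).mul ((Yv_hom n i).mul (ih (k - i) (by omega)))
        have e : (0 : ℕ) + (i + 1 + (k - i)) = k + 1 := by omega
        exact e ▸ h1
      · have h2 := (isWeightedHomogeneous_C (fun i : Fin n => (i : ℕ) + 1)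
            ((-1 : ℤ)^k * (k+1))).mul (Yv_hom n k)
        have e : (0 : ℕ) + (k + 1) = k + 1 := by omega
        exact e ▸ h2

lemma shiftSub_Yv {n j : ℕ} (h : j < n) :
    shiftSub n (Yv n j) = (if j = 0 then 1 else Yv n (j-1)) + Yv n j := by
  have hj1 : j - 1 < n := lt_of_le_of_lt (Nat.sub_le _ _) h
  simp only [Yv, dif_pos h, dif_pos hj1, shiftSub, aeval_X]

lemma shiftSub_C (n : ℕ) (a : ℤ) : shiftSub n (C a) = C a := by
  simp [shiftSub, algebraMap_eq]

lemma shift_Fp (n : ℕ) : ∀ k, 1 ≤ k → k ≤ n → shiftSub n (Fp n k) = 1 + Fp n k := by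
  intro k
  induction k using Nat.strong_induction_on with
  | _ k ih =>
    match k with
    | 0 => intro h; omega
    | 1 =>
      intro _ h1
      rw [Fp_succ]
      simp only [Finset.range_zero, Finset.sum_empty, zero_add, pow_zero, one_mul,
        Nat.cast_zero, map_mul, shiftSub_C, shiftSub_Yv (show 0 < n by omega)]
      simp
    | (m+2) =>
      intro _ hle
      rw [Fp_succ n (m+1)]
      rw [map_add, map_sum, map_mul, shiftSub_C,
        shiftSub_Yv (show m+1 < n by omega)]
      have step : ∀ i ∈ Finset.range (m+1),
          shiftSub n (C ((-1:ℤ)^i) * (Yv n i * Fp n (m+1-i)))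
          = C ((-1:ℤ)^i) * (Yv n i * Fp n (m+1-i))
            + (C ((-1:ℤ)^i) * ((if i = 0 then 1 else Yv n (i-1)) * Fp n (m+1-i))
              + (C ((-1:ℤ)^i) * (if i = 0 then 1 else Yv n (i-1))
                + C ((-1:ℤ)^i) * Yv n i)) := by
        intro i hi
        simp only [Finset.mem_range] at hi
        rw [map_mul, map_mul, shiftSub_C, shiftSub_Yv (show i < n by omega),
          ih (m+1-i) (by omega) (by omega) (by omega)]
        ring
      rw [Finset.sum_congr rfl step, Finset.sum_add_distrib, Finset.sum_add_distrib,
        Finset.sum_add_distrib]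
      have hS2 : ∑ i ∈ Finset.range (m+1),
          C ((-1:ℤ)^i) * ((if i = 0 then 1 else Yv n (i-1)) * Fp n (m+1-i))
          = C ((-1:ℤ)^m * (m+1)) * Yv n m := by
        rw [Finset.sum_range_succ']
        have e1 : ∀ i ∈ Finset.range m,
            C ((-1:ℤ)^(i+1)) * ((if i+1 = 0 then (1 : MvPolynomial (Fin n) ℤ)
              else Yv n (i+1-1)) * Fp n (m+1-(i+1)))
            = -(C ((-1:ℤ)^i) * (Yv n i * Fp n (m-i))) := by
          intro i hi
          have : m+1-(i+1) = m - i := by omega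
          simp only [Nat.succ_ne_zero, if_false, Nat.add_sub_cancel, this, pow_succ,
            map_mul, map_neg, map_one]
          ring
        rw [Finset.sum_congr rfl e1, Finset.sum_neg_distrib]
        simp only [if_pos rfl, if_true, pow_zero, map_one, one_mul, Nat.sub_zero]
        linear_combination Fp_succ n m
      have hS3 : ∑ i ∈ Finset.range (m+1),
          C ((-1:ℤ)^i) * (if i = 0 then (1 : MvPolynomial (Fin n) ℤ) else Yv n (i-1))
          = 1 - ∑ i ∈ Finset.range m, C ((-1:ℤ)^i) * Yv n i := by
        rw [Finset.sum_range_succ']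
        have e1 : ∀ i ∈ Finset.range m,
            C ((-1:ℤ)^(i+1)) * (if i+1 = 0 then (1 : MvPolynomial (Fin n) ℤ)
              else Yv n (i+1-1))
            = -(C ((-1:ℤ)^i) * Yv n i) := by
          intro i hi
          simp only [Nat.succ_ne_zero, if_false, Nat.add_sub_cancel, pow_succ,
            map_mul, map_neg, map_one]
          ring
        rw [Finset.sum_congr rfl e1, Finset.sum_neg_distrib]
        simp only [if_pos rfl, if_true, pow_zero, map_one, one_mul]
        ring
      have hS4 : ∑ i ∈ Finset.range (m+1), C ((-1:ℤ)^i) * Yv n i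
          = ∑ i ∈ Finset.range m, C ((-1:ℤ)^i) * Yv n i + C ((-1:ℤ)^m) * Yv n m :=
        Finset.sum_range_succ _ _
      rw [hS2, hS3, hS4]
      have hc : (C ((-1:ℤ)^(m+1) * ((m+1 : ℕ)+1)) : MvPolynomial (Fin n) ℤ)
          = -(C ((-1:ℤ)^m * ((m:ℕ)+1))) - C ((-1:ℤ)^m) := by
        push_cast
        rw [show ((-1:ℤ)^(m+1) * ((m:ℤ)+1+1)) = (-((-1:ℤ)^m * ((m:ℤ)+1))) + -((-1:ℤ)^m) by ring]
        rw [map_add, map_neg, map_neg]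
        ring
      rw [hc]
      have hm1 : (m+1) - 1 = m := rfl
      rw [show (if m+1 = 0 then (1 : MvPolynomial (Fin n) ℤ) else Yv n (m+1-1)) = Yv n m by
        simp]
      ring

/-- **Proposition 2.2 (existence).** For each `n ≥ 1` there is a polynomial
`f ∈ ℤ[x_1, …, x_n]`, homogeneous of degree `n` for the grading in which `x_i`
has degree `i`, satisfying `f(1 + x_1, x_1 + x_2, …, x_{n-1} + x_n) = 1 + f`. -/
theorem exists_newton_polynomial (n : ℕ) (hn : 1 ≤ n) :
    ∃ f : MvPolynomial (Fin n) ℤ,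
      f.IsWeightedHomogeneous (fun i : Fin n => (i : ℕ) + 1) n ∧
      shiftSub n f = 1 + f :=
  ⟨Fp n n, Fp_hom n n, shift_Fp n n hn le_rfl⟩
end

section
/- For each integer n ≥ 1 the polynomial of Proposition 2.2 is unique: if f and f' in ℤ[x_1, …, x_n] are both homogeneous of degree n with respect to the grading in which x_i has degree i, and both satisfy f(1 + x_1, x_1 + x_2, …, x_{n-1} + x_n) = 1 + f(x_1, …, x_n) and f'(1 + x_1, x_1 + x_2, …, x_{n-1} + x_n) = 1 + f'(x_1, …, x_n), then f = f'. -/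
open MvPolynomial

/-! Substitute the elementary symmetric polynomials `e_1, …, e_n` in variables `y_0, …, y_N`
into `g = f - f'`. Specializing `y_0 = 1` turns `e_{k+1}(y_0, …, y_N)` into
`e_{k+1}(y_1, …, y_N) + e_k(y_1, …, y_N)`, which is exactly the shift substitution, so
`g(e(y_0, …, y_N))` at `y_0 = 1` equals `(shift g)(e(y_1, …, y_N)) = g(e(y_1, …, y_N))`.
As `g(e(y))` is homogeneous, it is determined by this specialization; by induction on `N`,
starting from `g(0) = 0` (as `n ≥ 1`), `g(e_1, …, e_n) = 0` in `n` variables, and the algebraic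
independence of `e_1, …, e_n` gives `g = 0`. -/

open Finset

theorem Multiset.esymm_cons_succ {R : Type*} [CommSemiring R] (a : R) (s : Multiset R) (k : ℕ) :
    (a ::ₘ s).esymm (k + 1) = s.esymm (k + 1) + a * s.esymm k := by
  simp only [Multiset.esymm, Multiset.powersetCard_cons, Multiset.map_add, Multiset.sum_add,
    Multiset.map_map, Function.comp_def, Multiset.prod_cons, Multiset.sum_map_mul_left]

namespace MvPolynomial

variable {R : Type*} [CommSemiring R]

theorem isHomogeneous_esymm (σ : Type*) [Fintype σ] (k : ℕ) :
    (esymm σ R k).IsHomogeneous k :=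
  IsHomogeneous.sum _ _ _ fun t ht ↦ by
    simpa [(mem_powersetCard_univ.mp ht)] using
      IsHomogeneous.prod t X (fun _ ↦ 1) fun i _ ↦ isHomogeneous_X R i

theorem IsWeightedHomogeneous.isHomogeneous_aeval {σ τ S : Type*} [CommSemiring S] [Algebra R S]
    {w : σ → ℕ} {φ : MvPolynomial σ R} {m : ℕ} (hφ : φ.IsWeightedHomogeneous w m)
    (g : σ → MvPolynomial τ S) (hg : ∀ i, (g i).IsHomogeneous (w i)) :
    (aeval g φ).IsHomogeneous m := by
  apply IsHomogeneous.sum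
  intro d hd
  rw [← zero_add m]
  refine (isHomogeneous_C _ _).mul ?_
  convert IsHomogeneous.prod d.support _ (fun i ↦ w i * d i) fun i _ ↦ (hg i).pow (d i) using 1
  · rfl
  · rw [← hφ (mem_support_iff.mp hd), Finsupp.weight_apply, Finsupp.sum]
    simp [mul_comm]

theorem aeval_cons_one_esymm_succ (N k : ℕ) :
    aeval (Fin.cons 1 X : Fin (N + 1) → MvPolynomial (Fin N) R) (esymm (Fin (N + 1)) R (k + 1))
      = esymm (Fin N) R (k + 1) + esymm (Fin N) R k := by
  rw [aeval_esymm_eq_multiset_esymm, Fin.univ_succ, Finset.cons_val, Multiset.map_cons,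
    Finset.map_val, Multiset.map_map, Fin.cons_zero, Multiset.esymm_cons_succ, one_mul,
    esymm_eq_multiset_esymm]
  simp

theorem aeval_cons_one_monomial {N : ℕ} (e : Fin (N + 1) →₀ ℕ) (r : R) :
    aeval (Fin.cons 1 X : Fin (N + 1) → MvPolynomial (Fin N) R) (monomial e r)
      = monomial e.tail r := by
  rw [aeval_monomial, monomial_eq, Finsupp.prod_fintype _ _ fun _ ↦ pow_zero _,
    Finsupp.prod_fintype _ _ fun _ ↦ pow_zero _, Fin.prod_univ_succ]
  simp [Finsupp.tail_apply, algebraMap_eq]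

theorem IsHomogeneous.coeff_aeval_cons_one {N n : ℕ} {p : MvPolynomial (Fin (N + 1)) R}
    (hp : p.IsHomogeneous n) {d : Fin (N + 1) →₀ ℕ} (hd : d.degree = n) :
    coeff d.tail (MvPolynomial.aeval (Fin.cons 1 X : Fin (N + 1) → MvPolynomial (Fin N) R) p)
      = coeff d p := by
  have degree_eq (e : Fin (N + 1) →₀ ℕ) : e.degree = e 0 + e.tail.degree := by
    simp [Finsupp.degree_eq_sum, Fin.sum_univ_succ, Finsupp.tail_apply]
  conv_lhs => rw [p.as_sum, map_sum]
  simp_rw [aeval_cons_one_monomial, coeff_sum, coeff_monomial]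
  refine (sum_eq_single d (fun e he hne ↦ if_neg fun htail ↦ hne ?_) fun hd' ↦ ?_).trans
    (if_pos rfl)
  · have he_deg : e.degree = n := by
      by_contra h
      exact mem_support_iff.mp he (hp.coeff_eq_zero h)
    have h0 : e 0 = d 0 := by
      rw [degree_eq] at he_deg hd
      rw [htail] at he_deg
      omega
    rw [← Finsupp.cons_tail e, ← Finsupp.cons_tail d, h0, htail]
  · rw [if_pos rfl, notMem_support_iff.mp hd']

theorem IsHomogeneous.eq_zero_of_aeval_cons_one_eq_zero {N n : ℕ}
    {p : MvPolynomial (Fin (N + 1)) R} (hp : p.IsHomogeneous n)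
    (h : MvPolynomial.aeval (Fin.cons 1 X : Fin (N + 1) → MvPolynomial (Fin N) R) p = 0) :
    p = 0 := by
  ext d
  by_cases hd : d.degree = n
  · rw [← hp.coeff_aeval_cons_one hd, h, coeff_zero, coeff_zero]
  · exact hp.coeff_eq_zero hd

end MvPolynomial

theorem aeval_cons_one_comp_aeval_esymm (N n : ℕ) :
    (aeval (Fin.cons 1 X : Fin (N + 1) → MvPolynomial (Fin N) ℤ)).comp
        (aeval fun i : Fin n ↦ esymm (Fin (N + 1)) ℤ (i + 1))
      = (aeval fun i : Fin n ↦ esymm (Fin N) ℤ (i + 1)).comp (shiftSub n) := by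
  refine algHom_ext fun i ↦ ?_
  simp only [AlgHom.comp_apply, aeval_X, shiftSub, map_add, aeval_cons_one_esymm_succ]
  split_ifs with hi
  · simp [hi, add_comm]
  · have hpred : (i : ℕ) - 1 + 1 = i := Nat.sub_add_cancel (Nat.one_le_iff_ne_zero.mpr hi)
    simp [hpred, add_comm]

theorem aeval_esymm_eq_zero_of_shiftSub_eq_self {n : ℕ} (hn : 1 ≤ n)
    {g : MvPolynomial (Fin n) ℤ}
    (hg : g.IsWeightedHomogeneous (fun i : Fin n ↦ (i : ℕ) + 1) n)
    (hfix : shiftSub n g = g) (N : ℕ) :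
    aeval (fun i : Fin n ↦ esymm (Fin N) ℤ (i + 1)) g = 0 := by
  induction N with
  | zero =>
    have h_const : coeff 0 g = 0 := hg.coeff_eq_zero 0 (by rw [map_zero]; omega)
    have h_esymm : (fun i : Fin n ↦ esymm (Fin 0) ℤ (i + 1)) = 0 :=
      funext fun i ↦ by rw [esymm, Finset.powersetCard_eq_empty.mpr (by simp), sum_empty]; rfl
    rw [h_esymm, Pi.zero_def, aeval_zero', constantCoeff_eq, h_const, map_zero]
  | succ N ih =>
    have h_hom :=
      hg.isHomogeneous_aeval _ fun i ↦ isHomogeneous_esymm (R := ℤ) (Fin (N + 1)) (i + 1)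
    refine h_hom.eq_zero_of_aeval_cons_one_eq_zero ?_
    rw [← AlgHom.comp_apply, aeval_cons_one_comp_aeval_esymm, AlgHom.comp_apply, hfix, ih]

/-- **Proposition 2.2 (uniqueness).** For each `n ≥ 1`, any two polynomials in
`ℤ[x_1, …, x_n]` that are homogeneous of degree `n` (for the grading where `x_i`
has degree `i`) and satisfy `f(1 + x_1, …, x_{n-1} + x_n) = 1 + f` are equal. -/
theorem newton_polynomial_unique (n : ℕ) (hn : 1 ≤ n)
    (f f' : MvPolynomial (Fin n) ℤ)
    (hf : f.IsWeightedHomogeneous (fun i : Fin n => (i : ℕ) + 1) n)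
    (hf' : f'.IsWeightedHomogeneous (fun i : Fin n => (i : ℕ) + 1) n)
    (he : shiftSub n f = 1 + f)
    (he' : shiftSub n f' = 1 + f') :
    f = f' := by
  have hfix : shiftSub n (f - f') = f - f' := by
    rw [map_sub, he, he', add_sub_add_left_eq_sub]
  have hvanish := aeval_esymm_eq_zero_of_shiftSub_eq_self hn (hf.sub hf') hfix n
  rw [← sub_eq_zero]
  refine (injective_iff_map_eq_zero _).mp (esymmAlgHom_fin_injective ℤ le_rfl) _ ?_
  exact Subtype.ext ((esymmAlgHom_apply _).trans hvanish)
end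

section
/- Define polynomials f_n ∈ ℤ[x_1, …, x_n] recursively by f_1 = x_1 and, for n > 1, f_n = Σ_{k=1}^{n-1} (−1)^{k−1} x_k · f_{n−k} + (−1)^{n−1} n · x_n. Then for every n ≥ 1 the identity f_n(1 + x_1, x_1 + x_2, …, x_{n-1} + x_n) = 1 + f_n(x_1, …, x_n) holds in ℤ[x_1, …, x_n]. -/
open MvPolynomial

/-- The Newton polynomials, defined recursively by `f_1 = x_1` and, for `n > 1`,
`f_n = Σ_{k=1}^{n-1} (−1)^{k−1} x_k f_{n−k} + (−1)^{n−1} n x_n`.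
Here the variable `X i : MvPolynomial ℕ ℤ` represents `x_{i+1}`, so `newton n`
lies in `ℤ[x_1, …, x_n]` viewed inside `ℤ[x_1, x_2, …]`. -/
noncomputable def newton : ℕ → MvPolynomial ℕ ℤ
  | 0 => 0
  | 1 => X 0
  | (n + 2) =>
      (∑ k ∈ Finset.range (n + 1),
        (-1 : MvPolynomial ℕ ℤ) ^ k * X k * newton (n + 1 - k))
      + (-1 : MvPolynomial ℕ ℤ) ^ (n + 1) * ((n + 2 : ℕ) : MvPolynomial ℕ ℤ) * X (n + 1)
  decreasing_by omega

noncomputable def newtonC (k : ℕ) : MvPolynomial ℕ ℤ := if k = 0 then 1 else X (k - 1)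

lemma newtonC_zero : newtonC 0 = 1 := rfl
lemma newtonC_succ (k : ℕ) : newtonC (k + 1) = X k := rfl

lemma newton_succ (n : ℕ) :
    newton (n + 1) = (∑ k ∈ Finset.range n,
        (-1 : MvPolynomial ℕ ℤ) ^ k * X k * newton (n - k))
      + (-1 : MvPolynomial ℕ ℤ) ^ n * ((n + 1 : ℕ) : MvPolynomial ℕ ℤ) * X n := by
  cases n with
  | zero => simp [newton]
  | succ m => rw [newton]

lemma sum_newtonC_newton (n : ℕ) :
    ∑ k ∈ Finset.range (n + 1), (-1 : MvPolynomial ℕ ℤ) ^ k * newtonC k * newton (n + 1 - k)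
      = (-1 : MvPolynomial ℕ ℤ) ^ n * ((n + 1 : ℕ) : MvPolynomial ℕ ℤ) * X n := by
  rw [Finset.sum_range_succ']
  have h1 : ∀ k ∈ Finset.range n,
      (-1 : MvPolynomial ℕ ℤ) ^ (k + 1) * newtonC (k + 1) * newton (n + 1 - (k + 1))
        = -((-1) ^ k * X k * newton (n - k)) := by
    intro k hk
    rw [newtonC_succ]
    have h2 : n + 1 - (k + 1) = n - k := by omega
    rw [h2, pow_succ]
    ring
  rw [Finset.sum_congr rfl h1, Finset.sum_neg_distrib, newtonC_zero, Nat.sub_zero, newton_succ]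
  ring

lemma telescope (n : ℕ) :
    ∑ k ∈ Finset.range (n + 1),
        ((-1 : MvPolynomial ℕ ℤ) ^ k * newtonC k - (-1 : MvPolynomial ℕ ℤ) ^ (k+1) * newtonC (k+1))
      = 1 - (-1 : MvPolynomial ℕ ℤ) ^ (n + 1) * X n := by
  rw [Finset.sum_range_sub' (fun k => (-1 : MvPolynomial ℕ ℤ) ^ k * newtonC k) (n+1),
    newtonC_zero, newtonC_succ]
  ring

/-- For every `n ≥ 1` the Newton polynomial satisfies
`f_n(1 + x_1, x_1 + x_2, …, x_{n-1} + x_n) = 1 + f_n(x_1, …, x_n)`,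
where each variable `x_i` is replaced by `x_{i-1} + x_i` with the convention `x_0 = 1`. -/
theorem newton_shift (n : ℕ) (hn : 1 ≤ n) :
    aeval (fun i : ℕ => (if i = 0 then 1 else X (i - 1)) + X i) (newton n)
      = 1 + newton n := by
  induction n using Nat.strong_induction_on with
  | _ n ih =>
  match n, hn with
  | 1, _ => simp [newton, newtonC]
  | (n + 2), _ =>
    have hσ : ∀ i : ℕ, ((if i = 0 then 1 else X (i - 1)) + X i : MvPolynomial ℕ ℤ)
        = newtonC i + newtonC (i + 1) := by
      intro i; cases i <;> simp [newtonC]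
    rw [newton]
    simp only [map_add, map_sum, map_mul, map_pow, map_neg, map_one, aeval_X, map_natCast]
    have key : ∀ k ∈ Finset.range (n + 1),
        (-1 : MvPolynomial ℕ ℤ) ^ k *
            ((if k = 0 then 1 else X (k - 1)) + X k) *
            aeval (fun i : ℕ => (if i = 0 then 1 else X (i - 1)) + X i) (newton (n + 1 - k))
          = (-1) ^ k * X k * newton (n + 1 - k)
            + ((-1) ^ k * newtonC k - (-1) ^ (k + 1) * newtonC (k + 1))
            + (-1) ^ k * newtonC k * newton (n + 1 - k) := by
      intro k hk
      rw [Finset.mem_range] at hk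
      rw [ih (n + 1 - k) (by omega) (by omega), hσ k, newtonC_succ, pow_succ]
      ring
    rw [Finset.sum_congr rfl key, Finset.sum_add_distrib, Finset.sum_add_distrib,
      telescope, sum_newtonC_newton, hσ (n + 1), newtonC_succ, newtonC_succ]
    push_cast
    ring
end

section
/- Let n ≥ 1 and let h ∈ ℤ[x_1, …, x_n] be a nonzero polynomial that is homogeneous of degree n with respect to the grading in which the variable x_i has degree i. Let k be the pseudo-degree of h, that is, the total degree of h when every variable x_i is assigned degree 1. Then 1 ≤ k ≤ n, and the homogeneous component of weighted degree n − k (with respect to the grading in which x_i has degree i) of the substituted polynomial h(1 + x_1, x_1 + x_2, …, x_{n-1} + x_n) is nonzero; in particular this substituted polynomial is not homogeneous of weighted degree n. -/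
/-!
The shift sends `x^d` to `∏ (x_{i-1} + x_i)^(d_i)`, whose unique monomial of least weight is
`x^(downShift d)` (every `x_i` replaced by `x_{i-1}`), with coefficient `1` and weight
`wt d - |d|`. Take a monomial `x^d₀` of `h` of total degree `k`. Every monomial `x^d` of `h` has
weight `n`, so its image contributes only in weights `≥ n - |d| ≥ n - k`, and in weight `n - k`
only at `x^(downShift d)` with `|d| = k`. As `d` is recovered from `downShift d` and `|d|`, the
coefficient of `x^(downShift d₀)` in the shifted polynomial equals that of `x^d₀` in `h`.
-/

open MvPolynomial

open Finsupp (weight degree)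

theorem Finsupp.degree_le_weight {σ : Type*} {w : σ → ℕ} (hw : ∀ i, 1 ≤ w i) (d : σ →₀ ℕ) :
    degree d ≤ weight w d := by
  rw [degree_apply, weight_apply]
  exact Finset.sum_le_sum fun i _ => Nat.le_mul_of_pos_right _ (hw i)

namespace MvPolynomial

variable {σ R : Type*} [CommSemiring R]

theorem totalDegree_le_of_isWeightedHomogeneous {w : σ → ℕ} (hw : ∀ i, 1 ≤ w i)
    {p : MvPolynomial σ R} {m : ℕ} (hp : p.IsWeightedHomogeneous w m) : p.totalDegree ≤ m :=
  Finset.sup_le fun d hd => (Finsupp.degree_le_weight hw d).trans_eq (hp (mem_support_iff.mp hd))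

theorem exists_mem_support_degree_eq_totalDegree {p : MvPolynomial σ R} (hp : p ≠ 0) :
    ∃ d ∈ p.support, degree d = p.totalDegree := by
  obtain ⟨d, hd, hsup⟩ := Finset.exists_mem_eq_sup _ (support_nonempty.mpr hp)
    fun s : σ →₀ ℕ => s.sum fun _ e => e
  exact ⟨d, hd, hsup.symm⟩

def IsMonicLowestMonomial (w : σ → ℕ) (a : σ →₀ ℕ) (p : MvPolynomial σ R) : Prop :=
  coeff a p = 1 ∧ ∀ m ≠ a, coeff m p ≠ 0 → weight w a < weight w m

theorem isMonicLowestMonomial_monomial (w : σ → ℕ) (a : σ →₀ ℕ) :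
    IsMonicLowestMonomial w a (monomial a (1 : R)) := by
  classical
  refine ⟨by simp, fun m hm hmc => absurd ?_ hmc⟩
  rw [coeff_monomial, if_neg hm.symm]

theorem isMonicLowestMonomial_monomial_add_monomial {w : σ → ℕ} {a b : σ →₀ ℕ}
    (hab : weight w a < weight w b) :
    IsMonicLowestMonomial w a (monomial a 1 + monomial b (1 : R)) := by
  classical
  have hba : b ≠ a := fun h => hab.ne (by rw [h])
  refine ⟨by simp [coeff_monomial, hba], fun m hm hmc => ?_⟩
  rcases eq_or_ne m b with rfl | hmb
  · exact hab
  · simp [coeff_monomial, hm.symm, hmb.symm] at hmc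

namespace IsMonicLowestMonomial

variable {w : σ → ℕ} {a b : σ →₀ ℕ} {p q : MvPolynomial σ R}

theorem weight_le (hp : IsMonicLowestMonomial w a p) {m : σ →₀ ℕ} (hm : coeff m p ≠ 0) :
    weight w a ≤ weight w m := by
  rcases eq_or_ne m a with rfl | hma
  · rfl
  · exact (hp.2 m hma hm).le

theorem weight_add_lt_weight_add (hp : IsMonicLowestMonomial w a p)
    (hq : IsMonicLowestMonomial w b q) {u v : σ →₀ ℕ} (hu : coeff u p ≠ 0) (hv : coeff v q ≠ 0)
    (huv : (u, v) ≠ (a, b)) : weight w (a + b) < weight w (u + v) := by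
  rw [map_add, map_add]
  rcases eq_or_ne u a with rfl | hua
  · exact Nat.add_lt_add_left (hq.2 v (fun hvb => huv (by rw [hvb])) hv) _
  · exact Nat.add_lt_add_of_lt_of_le (hp.2 u hua hu) (hq.weight_le hv)

theorem mul (hp : IsMonicLowestMonomial w a p) (hq : IsMonicLowestMonomial w b q) :
    IsMonicLowestMonomial w (a + b) (p * q) := by
  classical
  refine ⟨?_, fun m hm hmc => ?_⟩
  · rw [coeff_mul, Finset.sum_eq_single_of_mem (a, b) (Finset.HasAntidiagonal.mem_antidiagonal.mpr rfl),
      hp.1, hq.1, one_mul]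
    rintro ⟨u, v⟩ huv hne
    by_contra hc
    have hlt := hp.weight_add_lt_weight_add hq (left_ne_zero_of_mul hc)
      (right_ne_zero_of_mul hc) hne
    rw [Finset.HasAntidiagonal.mem_antidiagonal.mp huv] at hlt
    exact hlt.false
  · rw [coeff_mul] at hmc
    obtain ⟨⟨u, v⟩, huv, hc⟩ := Finset.exists_ne_zero_of_sum_ne_zero hmc
    rw [← Finset.HasAntidiagonal.mem_antidiagonal.mp huv]
    refine hp.weight_add_lt_weight_add hq (left_ne_zero_of_mul hc) (right_ne_zero_of_mul hc) ?_
    rintro ⟨rfl, rfl⟩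
    exact hm (Finset.HasAntidiagonal.mem_antidiagonal.mp huv).symm

theorem pow (hp : IsMonicLowestMonomial w a p) (k : ℕ) :
    IsMonicLowestMonomial w (k • a) (p ^ k) := by
  induction k with
  | zero => simpa using isMonicLowestMonomial_monomial (R := R) w 0
  | succ k ih => simpa [pow_succ, succ_nsmul] using ih.mul hp

theorem prod {ι : Type*} (s : Finset ι) {a : ι → σ →₀ ℕ} {p : ι → MvPolynomial σ R}
    (h : ∀ i ∈ s, IsMonicLowestMonomial w (a i) (p i)) :
    IsMonicLowestMonomial w (∑ i ∈ s, a i) (∏ i ∈ s, p i) := by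
  induction s using Finset.cons_induction with
  | empty => simpa using isMonicLowestMonomial_monomial (R := R) w 0
  | cons i s hi ih =>
    rw [Finset.sum_cons, Finset.prod_cons]
    exact (h i (Finset.mem_cons_self i s)).mul (ih fun j hj => h j (Finset.mem_cons_of_mem hj))

end IsMonicLowestMonomial

end MvPolynomial

section Shift

variable {n : ℕ}

noncomputable def downExp (i : Fin n) : Fin n →₀ ℕ :=
  if (i : ℕ) = 0 then 0 else Finsupp.single ⟨(i : ℕ) - 1, (Nat.sub_le _ _).trans_lt i.2⟩ 1

noncomputable def downShift : (Fin n →₀ ℕ) →ₗ[ℕ] Fin n →₀ ℕ :=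
  Finsupp.linearCombination ℕ downExp

theorem shiftSub_X (i : Fin n) : shiftSub n (X i) = monomial (downExp i) 1 + X i := by
  rw [shiftSub, aeval_X, downExp]
  split_ifs <;> simp [X]

theorem weight_downExp (i : Fin n) : weight (fun j : Fin n => (j : ℕ) + 1) (downExp i) = i := by
  rw [downExp]
  split_ifs with hi
  · simp [hi]
  · simp [Finsupp.weight_single]
    omega

theorem weight_downShift_add_degree (d : Fin n →₀ ℕ) :
    weight (fun j : Fin n => (j : ℕ) + 1) (downShift d) + degree d
      = weight (fun j : Fin n => (j : ℕ) + 1) d := by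
  rw [downShift, Finsupp.linearCombination_apply, map_finsuppSum, Finsupp.degree_apply,
    Finsupp.weight_apply]
  simp only [Finsupp.sum, ← Finset.sum_add_distrib]
  refine Finset.sum_congr rfl fun i _ => ?_
  rw [map_nsmul, weight_downExp, smul_eq_mul, smul_eq_mul]
  ring

theorem downExp_apply_pred (i : Fin n) {j : Fin n} (hj : (j : ℕ) ≠ 0) :
    downExp i ⟨(j : ℕ) - 1, (Nat.sub_le _ _).trans_lt j.2⟩ = if i = j then 1 else 0 := by
  rw [downExp]
  split_ifs with hi hij hij <;> simp_all [Finsupp.single_apply, Fin.ext_iff]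
  all_goals omega

theorem downShift_apply_pred (d : Fin n →₀ ℕ) {j : Fin n} (hj : (j : ℕ) ≠ 0) :
    downShift d ⟨(j : ℕ) - 1, (Nat.sub_le _ _).trans_lt j.2⟩ = d j := by
  simp [downShift, Finsupp.linearCombination_apply, downExp_apply_pred _ hj]

theorem eq_of_degree_eq_of_downShift_eq {d d' : Fin n →₀ ℕ} (hdeg : degree d = degree d')
    (hshift : downShift d = downShift d') : d = d' := by
  have hpos : ∀ j : Fin n, (j : ℕ) ≠ 0 → d j = d' j := fun j hj => by
    rw [← downShift_apply_pred d hj, ← downShift_apply_pred d' hj, hshift]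
  ext j
  by_cases hj : (j : ℕ) = 0
  · have hrest : ∑ i ∈ Finset.univ.erase j, d i = ∑ i ∈ Finset.univ.erase j, d' i :=
      Finset.sum_congr rfl fun i hi =>
        hpos i fun hi0 => Finset.ne_of_mem_erase hi (Fin.ext (hi0.trans hj.symm))
    rw [Finsupp.degree_eq_sum, Finsupp.degree_eq_sum, ← Finset.add_sum_erase _ _ (Finset.mem_univ j),
      ← Finset.add_sum_erase _ _ (Finset.mem_univ j), hrest] at hdeg
    exact Nat.add_right_cancel hdeg
  · exact hpos j hj

theorem isMonicLowestMonomial_shiftSub_X (i : Fin n) :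
    IsMonicLowestMonomial (fun j : Fin n => (j : ℕ) + 1) (downExp i) (shiftSub n (X i)) := by
  rw [shiftSub_X, X]
  exact isMonicLowestMonomial_monomial_add_monomial (by simp [weight_downExp, Finsupp.weight_single])

theorem isMonicLowestMonomial_shiftSub_monomial (d : Fin n →₀ ℕ) :
    IsMonicLowestMonomial (fun j : Fin n => (j : ℕ) + 1) (downShift d)
      (shiftSub n (monomial d 1)) := by
  rw [monomial_eq, C_1, one_mul, Finsupp.prod, map_prod, downShift,
    Finsupp.linearCombination_apply, Finsupp.sum]
  simp only [map_pow]
  exact IsMonicLowestMonomial.prod _ fun i _ => (isMonicLowestMonomial_shiftSub_X i).pow (d i)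

theorem coeff_shiftSub (p : MvPolynomial (Fin n) ℤ) (e : Fin n →₀ ℕ) :
    coeff e (shiftSub n p) = ∑ d ∈ p.support, coeff d p * coeff e (shiftSub n (monomial d 1)) := by
  conv_lhs => rw [p.as_sum]
  rw [map_sum, coeff_sum]
  refine Finset.sum_congr rfl fun d _ => ?_
  rw [show monomial d (coeff d p) = coeff d p • monomial d 1 by
    rw [smul_monomial, smul_eq_mul, mul_one], map_smul, coeff_smul, smul_eq_mul]

theorem coeff_downShift_shiftSub {p : MvPolynomial (Fin n) ℤ} {m : ℕ}
    (hp : p.IsWeightedHomogeneous (fun j : Fin n => (j : ℕ) + 1) m) {d₀ : Fin n →₀ ℕ}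
    (hw : weight (fun j : Fin n => (j : ℕ) + 1) d₀ = m) (hdeg : degree d₀ = p.totalDegree) :
    coeff (downShift d₀) (shiftSub n p) = coeff d₀ p := by
  rw [coeff_shiftSub, Finset.sum_eq_single d₀ ?_ ?_,
    (isMonicLowestMonomial_shiftSub_monomial d₀).1, mul_one]
  · intro d hd hd₀
    refine mul_eq_zero_of_right _ (by_contra fun hc => ?_)
    have hd_weight := weight_downShift_add_degree d
    have hd₀_weight := weight_downShift_add_degree d₀
    rw [hp (mem_support_iff.mp hd)] at hd_weight
    have hk : degree d ≤ p.totalDegree := le_totalDegree hd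
    rcases eq_or_ne (downShift d₀) (downShift d) with hshift | hshift
    · rw [hshift] at hd₀_weight
      exact hd₀ (eq_of_degree_eq_of_downShift_eq (by omega) hshift.symm)
    · have := (isMonicLowestMonomial_shiftSub_monomial d).2 _ hshift hc
      omega
  · intro hd₀
    rw [notMem_support_iff.mp hd₀, zero_mul]

end Shift

/-- Let `h ∈ ℤ[x_1, …, x_n]` be nonzero and homogeneous of weighted degree `n`
(where `x_i` has weight `i`), and let `k` be its pseudo-degree (total degree when
every variable has degree 1).  Then `1 ≤ k ≤ n`, the homogeneous component of
weighted degree `n - k` of `h(1 + x_1, x_1 + x_2, …, x_{n-1} + x_n)` is nonzero,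
and in particular the substituted polynomial is not weighted-homogeneous of
degree `n`. -/
theorem shifted_polynomial_not_homogeneous (n : ℕ) (hn : 1 ≤ n)
    (h : MvPolynomial (Fin n) ℤ) (hne : h ≠ 0)
    (hhom : h.IsWeightedHomogeneous (fun i : Fin n => (i : ℕ) + 1) n) :
    1 ≤ h.totalDegree ∧ h.totalDegree ≤ n ∧
    weightedHomogeneousComponent (fun i : Fin n => (i : ℕ) + 1)
      (n - h.totalDegree) (shiftSub n h) ≠ 0 ∧
    ¬ (shiftSub n h).IsWeightedHomogeneous (fun i : Fin n => (i : ℕ) + 1) n := by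
  obtain ⟨d₀, hd₀, hdeg⟩ := exists_mem_support_degree_eq_totalDegree hne
  have hw : weight (fun i : Fin n => (i : ℕ) + 1) d₀ = n := hhom (mem_support_iff.mp hd₀)
  have hcoeff : coeff (downShift d₀) (shiftSub n h) ≠ 0 := by
    rw [coeff_downShift_shiftSub hhom hw hdeg]
    exact mem_support_iff.mp hd₀
  have hshift := weight_downShift_add_degree d₀
  have hk : 1 ≤ h.totalDegree := by
    rw [← hdeg, Nat.one_le_iff_ne_zero, Ne, Finsupp.degree_eq_zero_iff]
    rintro rfl
    simp only [map_zero] at hw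
    omega
  refine ⟨hk, totalDegree_le_of_isWeightedHomogeneous (fun _ => Nat.le_add_left 1 _) hhom,
    fun hzero => hcoeff ?_, fun hhom' => ?_⟩
  · have := congrArg (coeff (downShift d₀)) hzero
    rwa [coeff_weightedHomogeneousComponent, if_pos (by omega), coeff_zero] at this
  · have := hhom' hcoeff
    omega
end
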